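/- For every separable state ρ on H = H_A ⊗ H_B with marginals ρ_A = tr_B(ρ) and ρ_B = tr_A(ρ), and for every θ ∈ [0, π], the following inequality holds: ‖ρ − cos θ · ρ_A ⊗ ρ_B‖_CCN ≤ √[ (1 − cos θ · tr(ρ_A²)) (1 − cos θ · tr(ρ_B²)) ]. -/

import Mathlib

open scoped Kronecker ComplexOrder
open Matrix Finset

/-- Hilbert-Schmidt inner product on matrices. -/
noncomputable def hsInner {n : Type*} [Fintype n] (A B : Matrix n n ℂ) : ℂ :=
  (Aᴴ * B).trace

/-- Hilbert-Schmidt norm. -/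
noncomputable def hsNorm {n : Type*} [Fintype n] (A : Matrix n n ℂ) : ℝ :=
  Real.sqrt (hsInner A A).re

/-- A density operator: positive semidefinite with unit trace. -/
def IsDensity {n : Type*} [Fintype n] (ρ : Matrix n n ℂ) : Prop :=
  ρ.PosSemidef ∧ ρ.trace = 1

/-- A separable bipartite state: a convex combination of product density operators. -/
def IsSeparableState {NA NB : ℕ} (ρ : Matrix (Fin NA × Fin NB) (Fin NA × Fin NB) ℂ) : Prop :=
  ∃ (m : ℕ) (p : Fin m → ℝ)
    (ρA : Fin m → Matrix (Fin NA) (Fin NA) ℂ) (ρB : Fin m → Matrix (Fin NB) (Fin NB) ℂ),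
    (∀ i, 0 < p i) ∧ (∑ i, p i = 1) ∧ (∀ i, IsDensity (ρA i)) ∧ (∀ i, IsDensity (ρB i)) ∧
    ρ = ∑ i, (p i : ℂ) • (ρA i ⊗ₖ ρB i)

/-- The computable cross norm (CCN) on bipartite operators. -/
noncomputable def ccn {NA NB : ℕ} (C : Matrix (Fin NA × Fin NB) (Fin NA × Fin NB) ℂ) : ℝ :=
  sInf { r : ℝ | ∃ (n : ℕ) (A : Fin n → Matrix (Fin NA) (Fin NA) ℂ)
    (B : Fin n → Matrix (Fin NB) (Fin NB) ℂ),
    C = ∑ k, A k ⊗ₖ B k ∧ r = ∑ k, hsNorm (A k) * hsNorm (B k) }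

/-- The marginal (reduced density operator) of a bipartite operator on the A-side. -/
noncomputable def margA {NA NB : ℕ} (ρ : Matrix (Fin NA × Fin NB) (Fin NA × Fin NB) ℂ) :
    Matrix (Fin NA) (Fin NA) ℂ :=
  Matrix.of fun i i' => ∑ b : Fin NB, ρ (i, b) (i', b)

/-- The marginal (reduced density operator) of a bipartite operator on the B-side. -/
noncomputable def margB {NA NB : ℕ} (ρ : Matrix (Fin NA × Fin NB) (Fin NA × Fin NB) ℂ) :
    Matrix (Fin NB) (Fin NB) ℂ :=
  Matrix.of fun b b' => ∑ i : Fin NA, ρ (i, b) (i, b')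

/-! Write `ρ = ∑ pᵢ ρᵢᴬ ⊗ ρᵢᴮ`, so that `ρ_A = ∑ pᵢ ρᵢᴬ` and `ρ_B = ∑ pᵢ ρᵢᴮ`. For `s` with
`2s - s² = cos θ`, i.e. `s = 1 - √(1 - cos θ)`, which is real since `cos θ ≤ 1`, bilinearity gives
`ρ - cos θ · ρ_A ⊗ ρ_B = ∑ pᵢ (ρᵢᴬ - s ρ_A) ⊗ (ρᵢᴮ - s ρ_B)`.
This decomposition bounds the CCN by `∑ pᵢ ‖ρᵢᴬ - s ρ_A‖ ‖ρᵢᴮ - s ρ_B‖`, and by Cauchy–Schwarz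
it suffices to bound each weighted sum of squares. The same bilinear identity, applied to the
Hilbert–Schmidt inner product, gives `∑ pᵢ ‖ρᵢᴬ - s ρ_A‖² = ∑ pᵢ tr (ρᵢᴬ)² - cos θ · tr ρ_A²`,
and the purities `tr (ρᵢᴬ)²` are at most `1`. -/

theorem LinearMap.sum_smul_apply₂_sub_smul_mean {R M N P ι : Type*} [CommRing R]
    [AddCommGroup M] [Module R M] [AddCommGroup N] [Module R N] [AddCommGroup P] [Module R P]
    [Fintype ι] (f : M →ₗ[R] N →ₗ[R] P) {w : ι → R} (hw : ∑ i, w i = 1) (s : R)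
    (a : ι → M) (b : ι → N) :
    ∑ i, w i • f (a i - s • ∑ j, w j • a j) (b i - s • ∑ j, w j • b j) =
      ∑ i, w i • f (a i) (b i) - (2 * s - s ^ 2) • f (∑ j, w j • a j) (∑ j, w j • b j) := by
  set a' := ∑ j, w j • a j
  set b' := ∑ j, w j • b j
  have hl : ∑ i, w i • f a' (b i) = f a' b' := by simp [b', map_sum, map_smul]
  have hr : ∑ i, w i • f (a i) b' = f a' b' := by
    simp [a', map_sum, map_smul, LinearMap.sum_apply]
  have hc : ∑ i, w i • f a' b' = f a' b' := by rw [← Finset.sum_smul, hw, one_smul]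
  simp only [map_sub, map_smul, LinearMap.sub_apply, LinearMap.smul_apply, smul_sub,
    Finset.sum_sub_distrib, smul_comm (w _) s, ← Finset.smul_sum, hl, hr, hc]
  module

lemma Real.sum_mul_mul_le_sqrt_mul_sqrt {ι : Type*} (s : Finset ι) {w : ι → ℝ}
    (hw : ∀ i, 0 ≤ w i) (f g : ι → ℝ) :
    ∑ i ∈ s, w i * (f i * g i) ≤ √(∑ i ∈ s, w i * f i ^ 2) * √(∑ i ∈ s, w i * g i ^ 2) := by
  have key := Real.sum_mul_le_sqrt_mul_sqrt s (fun i => √(w i) * f i) (fun i => √(w i) * g i)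
  simp only [mul_pow, Real.sq_sqrt (hw _)] at key
  convert key using 2 with i
  rw [mul_mul_mul_comm, Real.mul_self_sqrt (hw i)]

@[simp] lemma Matrix.kroneckerBilinear_apply_apply {R α l m n p : Type*} [CommSemiring R]
    [Semiring α] [Algebra R α] (A : Matrix l m α) (B : Matrix n p α) :
    kroneckerBilinear (R := R) A B = A ⊗ₖ B :=
  rfl

lemma Matrix.isHermitian_sum_smul {n ι : Type*} [Fintype ι] (w : ι → ℝ)
    {A : ι → Matrix n n ℂ} (hA : ∀ i, (A i).IsHermitian) : (∑ i, w i • A i).IsHermitian := by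
  simp only [IsHermitian, conjTranspose_sum, conjTranspose_smul, star_trivial]
  exact Finset.sum_congr rfl fun i _ => by rw [(hA i).eq]

section Spectral

variable {𝕜 n : Type*} [RCLike 𝕜] [Fintype n]

lemma Matrix.trace_conjStarAlgAut [DecidableEq n] (u : unitary (Matrix n n 𝕜))
    (x : Matrix n n 𝕜) : (Unitary.conjStarAlgAut 𝕜 _ u x).trace = x.trace := by
  rw [Unitary.conjStarAlgAut_apply, trace_mul_cycle, Unitary.coe_star_mul_self, one_mul]

lemma Matrix.IsHermitian.trace_mul_self [DecidableEq n] {A : Matrix n n 𝕜} (hA : A.IsHermitian) :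
    (A * A).trace = ∑ i, (hA.eigenvalues i : 𝕜) ^ 2 := by
  conv_lhs => rw [hA.spectral_theorem, ← map_mul, trace_conjStarAlgAut]
  simp [diagonal_mul_diagonal, trace_diagonal, sq]

lemma Matrix.PosSemidef.re_trace_mul_self_le {A : Matrix n n 𝕜} (hA : A.PosSemidef) :
    RCLike.re (A * A).trace ≤ RCLike.re A.trace ^ 2 := by
  classical
  rw [hA.1.trace_mul_self, hA.1.trace_eq_sum_eigenvalues]
  simp only [map_sum, ← RCLike.ofReal_pow, RCLike.ofReal_re]
  exact Finset.sum_sq_le_sq_sum_of_nonneg fun i _ => hA.eigenvalues_nonneg i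

end Spectral

section HilbertSchmidt

variable {n : Type*} [Fintype n]

noncomputable def hsInnerRe : Matrix n n ℂ →ₗ[ℝ] Matrix n n ℂ →ₗ[ℝ] ℝ :=
  LinearMap.mk₂ ℝ (fun A B => (hsInner A B).re)
    (fun A A' B => by simp [hsInner, Matrix.add_mul])
    (fun r A B => by simp [hsInner])
    (fun A B B' => by simp [hsInner, Matrix.mul_add])
    (fun r A B => by simp [hsInner])

@[simp] lemma hsInnerRe_apply (A B : Matrix n n ℂ) : hsInnerRe A B = (hsInner A B).re := rfl

lemma hsNorm_sq (A : Matrix n n ℂ) : hsNorm A ^ 2 = (hsInner A A).re :=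
  Real.sq_sqrt (Complex.nonneg_iff.mp (posSemidef_conjTranspose_mul_self A).trace_nonneg).1

lemma hsNorm_smul_of_nonneg {r : ℝ} (hr : 0 ≤ r) (A : Matrix n n ℂ) :
    hsNorm (r • A) = r * hsNorm A := by
  rw [hsNorm, hsNorm, ← hsInnerRe_apply, ← hsInnerRe_apply]
  simp only [map_smul, LinearMap.smul_apply, smul_eq_mul, ← mul_assoc]
  rw [Real.sqrt_mul (mul_self_nonneg r), Real.sqrt_mul_self hr]

lemma Matrix.IsHermitian.hsInner_self {A : Matrix n n ℂ} (hA : A.IsHermitian) :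
    hsInner A A = (A * A).trace := by rw [hsInner, hA.eq]

lemma IsDensity.hsNorm_sq_le_one {ρ : Matrix n n ℂ} (hρ : IsDensity ρ) : hsNorm ρ ^ 2 ≤ 1 := by
  rw [hsNorm_sq, hρ.1.1.hsInner_self]
  simpa [hρ.2] using hρ.1.re_trace_mul_self_le

lemma sum_hsNorm_sq_sub_smul_mean_le {ι : Type*} [Fintype ι] {w : ι → ℝ}
    (hw0 : ∀ i, 0 ≤ w i) (hw1 : ∑ i, w i = 1) {ρ : ι → Matrix n n ℂ}
    (hρ : ∀ i, IsDensity (ρ i)) (s : ℝ) :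
    ∑ i, w i * hsNorm (ρ i - s • ∑ j, w j • ρ j) ^ 2 ≤
      1 - (2 * s - s ^ 2) * ((∑ j, w j • ρ j) * ∑ j, w j • ρ j).trace.re := by
  have hvar := hsInnerRe.sum_smul_apply₂_sub_smul_mean hw1 s ρ ρ
  simp only [hsInnerRe_apply, smul_eq_mul, ← hsNorm_sq] at hvar
  have hpure : ∑ i, w i * hsNorm (ρ i) ^ 2 ≤ 1 :=
    calc ∑ i, w i * hsNorm (ρ i) ^ 2 ≤ ∑ i, w i * 1 :=
          Finset.sum_le_sum fun i _ => mul_le_mul_of_nonneg_left (hρ i).hsNorm_sq_le_one (hw0 i)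
      _ = 1 := by simp [hw1]
  rw [hvar, ← (isHermitian_sum_smul w fun i => (hρ i).1.1).hsInner_self, ← hsNorm_sq]
  linarith

end HilbertSchmidt

section Bipartite

variable {NA NB : ℕ}

lemma margA_sum_smul_kronecker {ι : Type*} [Fintype ι] (w : ι → ℝ)
    (A : ι → Matrix (Fin NA) (Fin NA) ℂ) {B : ι → Matrix (Fin NB) (Fin NB) ℂ}
    (hB : ∀ i, (B i).trace = 1) :
    margA (∑ i, w i • (A i ⊗ₖ B i)) = ∑ i, w i • A i := by
  ext a a'
  simp only [margA, of_apply, Matrix.sum_apply, Matrix.smul_apply, kronecker_apply,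
    Complex.real_smul]
  rw [Finset.sum_comm]
  refine Finset.sum_congr rfl fun i _ => ?_
  rw [← Finset.mul_sum, ← Finset.mul_sum, show ∑ b, B i b b = 1 from hB i, mul_one]

lemma margB_sum_smul_kronecker {ι : Type*} [Fintype ι] (w : ι → ℝ)
    {A : ι → Matrix (Fin NA) (Fin NA) ℂ} (B : ι → Matrix (Fin NB) (Fin NB) ℂ)
    (hA : ∀ i, (A i).trace = 1) :
    margB (∑ i, w i • (A i ⊗ₖ B i)) = ∑ i, w i • B i := by
  ext b b'
  simp only [margB, of_apply, Matrix.sum_apply, Matrix.smul_apply, kronecker_apply,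
    Complex.real_smul]
  rw [Finset.sum_comm]
  refine Finset.sum_congr rfl fun i _ => ?_
  rw [← Finset.mul_sum, ← Finset.sum_mul, show ∑ a, A i a a = 1 from hA i, one_mul]

lemma ccn_le_of_eq_sum {n : ℕ} {C : Matrix (Fin NA × Fin NB) (Fin NA × Fin NB) ℂ}
    (A : Fin n → Matrix (Fin NA) (Fin NA) ℂ) (B : Fin n → Matrix (Fin NB) (Fin NB) ℂ)
    (hC : C = ∑ k, A k ⊗ₖ B k) : ccn C ≤ ∑ k, hsNorm (A k) * hsNorm (B k) :=
  csInf_le ⟨0, fun _ ⟨_, _, _, _, hr⟩ => hr ▸ Finset.sum_nonneg fun _ _ =>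
    mul_nonneg (Real.sqrt_nonneg _) (Real.sqrt_nonneg _)⟩ ⟨n, A, B, hC, rfl⟩

lemma ccn_sum_smul_kronecker_le {n : ℕ} {w : Fin n → ℝ} (hw : ∀ k, 0 ≤ w k)
    (A : Fin n → Matrix (Fin NA) (Fin NA) ℂ) (B : Fin n → Matrix (Fin NB) (Fin NB) ℂ) :
    ccn (∑ k, w k • (A k ⊗ₖ B k)) ≤ ∑ k, w k * (hsNorm (A k) * hsNorm (B k)) := by
  refine (ccn_le_of_eq_sum (fun k => w k • A k) B ?_).trans_eq ?_
  · simp only [smul_kronecker]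
  · simp only [hsNorm_smul_of_nonneg (hw _), mul_assoc]

end Bipartite

theorem stmt16_theta_family_criterion_general {NA NB : ℕ}
    (ρ : Matrix (Fin NA × Fin NB) (Fin NA × Fin NB) ℂ)
    (hsep : IsSeparableState ρ)
    (θ : ℝ) :
    ccn (ρ - (Real.cos θ : ℂ) • (margA ρ ⊗ₖ margB ρ))
      ≤ Real.sqrt ((1 - Real.cos θ * ((margA ρ * margA ρ).trace.re))
          * (1 - Real.cos θ * ((margB ρ * margB ρ).trace.re))) := by
  obtain ⟨m, p, ρA, ρB, hp, hp1, hρA, hρB, rfl⟩ := hsep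
  have hp0 : ∀ i, 0 ≤ p i := fun i => (hp i).le
  set s := 1 - √(1 - Real.cos θ)
  have hs : 2 * s - s ^ 2 = Real.cos θ := by
    have := Real.sq_sqrt (sub_nonneg.2 (Real.cos_le_one θ))
    simp only [s]
    linear_combination -this
  simp only [Complex.coe_smul]
  rw [margA_sum_smul_kronecker _ _ fun i => (hρB i).2,
    margB_sum_smul_kronecker _ _ fun i => (hρA i).2, ← hs]
  set σA := ∑ i, p i • ρA i
  set σB := ∑ i, p i • ρB i
  have hdecomp := (kroneckerBilinear (R := ℝ)).sum_smul_apply₂_sub_smul_mean hp1 s ρA ρB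
  simp only [kroneckerBilinear_apply_apply] at hdecomp
  have hvarA := sum_hsNorm_sq_sub_smul_mean_le hp0 hp1 hρA s
  have hvarB := sum_hsNorm_sq_sub_smul_mean_le hp0 hp1 hρB s
  rw [← hdecomp]
  calc ccn (∑ i, p i • ((ρA i - s • σA) ⊗ₖ (ρB i - s • σB)))
      ≤ ∑ i, p i * (hsNorm (ρA i - s • σA) * hsNorm (ρB i - s • σB)) :=
        ccn_sum_smul_kronecker_le hp0 _ _
    _ ≤ √(∑ i, p i * hsNorm (ρA i - s • σA) ^ 2) * √(∑ i, p i * hsNorm (ρB i - s • σB) ^ 2) :=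
        Real.sum_mul_mul_le_sqrt_mul_sqrt _ hp0 _ _
    _ ≤ √(1 - (2 * s - s ^ 2) * (σA * σA).trace.re) *
          √(1 - (2 * s - s ^ 2) * (σB * σB).trace.re) := by gcongr
    _ = _ := (Real.sqrt_mul ((Finset.sum_nonneg fun i _ =>
          mul_nonneg (hp0 i) (sq_nonneg _)).trans hvarA) _).symm

/-- The θ-parametrized family of separability criteria: for every separable state ρ and
every θ ∈ [0, π], ‖ρ − cos θ · ρ_A ⊗ ρ_B‖_CCN ≤
√((1 − cos θ · tr ρ_A²)(1 − cos θ · tr ρ_B²)). -/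
theorem stmt16_theta_family_criterion {NA NB : ℕ} (hA : 2 ≤ NA) (hB : 2 ≤ NB)
    (ρ : Matrix (Fin NA × Fin NB) (Fin NA × Fin NB) ℂ)
    (hsep : IsSeparableState ρ)
    (θ : ℝ) (hθ0 : 0 ≤ θ) (hθπ : θ ≤ Real.pi) :
    ccn (ρ - (Real.cos θ : ℂ) • (margA ρ ⊗ₖ margB ρ))
      ≤ Real.sqrt ((1 - Real.cos θ * ((margA ρ * margA ρ).trace.re))
          * (1 - Real.cos θ * ((margB ρ * margB ρ).trace.re))) :=
  stmt16_theta_family_criterion_general ρ hsep θ
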